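/- Let x_l, x_{l+1}, r_l, r_{l+1} be nonzero vectors in R^n. Suppose cos(x_l, x_{l+1}) ≥ 1 - δ², cos(x_l, r_l) ≥ 1 - ι², and cos(x_{l+1}, r_{l+1}) ≥ 1 - ι², for δ, ι ∈ (0,1). Then the unit normalizations of r_l and r_{l+1} satisfy ‖r_l/‖r_l‖ - r_{l+1}/‖r_{l+1}‖‖ ≤ √2(δ + 2ι), and hence cos(r_l, r_{l+1}) ≥ 1 - (δ + 2ι)². -/

import Mathlib

/-! For unit vectors `‖u - v‖² = 2 - 2⟨u, v⟩`, so `cos(a, b) ≥ 1 - s²` says exactly that the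
normalisations of `a` and `b` are within `√2 s` of each other. The three hypotheses thus bound the
legs of the path `rl → xl → xl1 → rl1` between normalisations, and the triangle inequality gives
the first claim; reading the equivalence backwards gives the second. -/

open scoped RealInnerProductSpace

section

variable {F : Type*} [NormedAddCommGroup F] [InnerProductSpace ℝ F]

theorem norm_inv_norm_smul_sub_inv_norm_smul_sq {a b : F} (ha : a ≠ 0) (hb : b ≠ 0) :
    ‖‖a‖⁻¹ • a - ‖b‖⁻¹ • b‖ ^ 2 = 2 - 2 * (⟪a, b⟫ / (‖a‖ * ‖b‖)) := by
  have hna : ‖a‖ ≠ 0 := norm_ne_zero_iff.mpr ha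
  have hnb : ‖b‖ ≠ 0 := norm_ne_zero_iff.mpr hb
  rw [norm_sub_sq_real, norm_smul, norm_smul, real_inner_smul_left, real_inner_smul_right]
  simp only [norm_inv, norm_norm]
  field_simp
  ring

theorem norm_inv_norm_smul_sub_inv_norm_smul_le_iff {a b : F} (ha : a ≠ 0) (hb : b ≠ 0)
    {s : ℝ} (hs : 0 ≤ s) :
    ‖‖a‖⁻¹ • a - ‖b‖⁻¹ • b‖ ≤ √2 * s ↔ 1 - s ^ 2 ≤ ⟪a, b⟫ / (‖a‖ * ‖b‖) := by
  rw [← pow_le_pow_iff_left₀ (norm_nonneg _) (by positivity) two_ne_zero, mul_pow,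
    Real.sq_sqrt zero_le_two, norm_inv_norm_smul_sub_inv_norm_smul_sq ha hb]
  constructor <;> intro h <;> linarith

end

/-- if `cos(x_l, x_{l+1}) ≥ 1 - δ²`, `cos(x_l, r_l) ≥ 1 - ι²`, and
`cos(x_{l+1}, r_{l+1}) ≥ 1 - ι²` for nonzero vectors and `δ, ι ∈ (0,1)`, then the unit
normalizations of `r_l, r_{l+1}` are `√2(δ + 2ι)`-close, and hence
`cos(r_l, r_{l+1}) ≥ 1 - (δ + 2ι)²`. -/
theorem router_direction_transfer
    {F : Type*} [NormedAddCommGroup F] [InnerProductSpace ℝ F]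
    (xl xl1 rl rl1 : F) (δ ι : ℝ)
    (hxl : xl ≠ 0) (hxl1 : xl1 ≠ 0) (hrl : rl ≠ 0) (hrl1 : rl1 ≠ 0)
    (hδ : δ ∈ Set.Ioo (0 : ℝ) 1) (hι : ι ∈ Set.Ioo (0 : ℝ) 1)
    (h1 : 1 - δ ^ 2 ≤ ⟪xl, xl1⟫ / (‖xl‖ * ‖xl1‖))
    (h2 : 1 - ι ^ 2 ≤ ⟪xl, rl⟫ / (‖xl‖ * ‖rl‖))
    (h3 : 1 - ι ^ 2 ≤ ⟪xl1, rl1⟫ / (‖xl1‖ * ‖rl1‖)) :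
    ‖(‖rl‖)⁻¹ • rl - (‖rl1‖)⁻¹ • rl1‖ ≤ Real.sqrt 2 * (δ + 2 * ι) ∧
    1 - (δ + 2 * ι) ^ 2 ≤ ⟪rl, rl1⟫ / (‖rl‖ * ‖rl1‖) := by
  have hrl_xl : ‖‖rl‖⁻¹ • rl - ‖xl‖⁻¹ • xl‖ ≤ √2 * ι :=
    (norm_inv_norm_smul_sub_inv_norm_smul_le_iff hrl hxl hι.1.le).2
      (by rwa [real_inner_comm, mul_comm])
  have hxl_xl1 : ‖‖xl‖⁻¹ • xl - ‖xl1‖⁻¹ • xl1‖ ≤ √2 * δ :=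
    (norm_inv_norm_smul_sub_inv_norm_smul_le_iff hxl hxl1 hδ.1.le).2 h1
  have hxl1_rl1 : ‖‖xl1‖⁻¹ • xl1 - ‖rl1‖⁻¹ • rl1‖ ≤ √2 * ι :=
    (norm_inv_norm_smul_sub_inv_norm_smul_le_iff hxl1 hrl1 hι.1.le).2 h3
  have hrl_rl1 : ‖‖rl‖⁻¹ • rl - ‖rl1‖⁻¹ • rl1‖ ≤ √2 * (δ + 2 * ι) :=
    calc ‖‖rl‖⁻¹ • rl - ‖rl1‖⁻¹ • rl1‖
        ≤ ‖‖rl‖⁻¹ • rl - ‖xl‖⁻¹ • xl‖ + ‖‖xl‖⁻¹ • xl - ‖xl1‖⁻¹ • xl1‖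
            + ‖‖xl1‖⁻¹ • xl1 - ‖rl1‖⁻¹ • rl1‖ := by
          simpa only [dist_eq_norm] using dist_triangle4 (‖rl‖⁻¹ • rl) (‖xl‖⁻¹ • xl)
            (‖xl1‖⁻¹ • xl1) (‖rl1‖⁻¹ • rl1)
      _ ≤ √2 * ι + √2 * δ + √2 * ι := by gcongr
      _ = √2 * (δ + 2 * ι) := by ring
  exact ⟨hrl_rl1,
    (norm_inv_norm_smul_sub_inv_norm_smul_le_iff hrl hrl1 (by linarith [hδ.1, hι.1])).1 hrl_rl1⟩
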